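/- arXiv:1308.0149 — 4 statements merged into one kernel-verified Lean document; each statement's English description precedes it below -/
import Mathlib

section
/- Let (R, m) be a Noetherian local ring of prime characteristic p. If every ideal generated by a full system of parameters of R is Frobenius closed, then every ideal generated by part of a system of parameters is Frobenius closed. -/
open Ideal IsLocalRing

section Prelim

variable {R : Type*} [CommRing R]

/-- The Frobenius power `I^{[q]}`: the ideal generated by `q`-th powers of elements of `I`. -/
def frobeniusPower (I : Ideal R) (q : ℕ) : Ideal R :=
  Ideal.span ((fun a => a ^ q) '' (I : Set R))

/-- The Frobenius closure `I^F = {x | x^{p^e} ∈ I^{[p^e]} for some e}`. -/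
def frobeniusClosure (p : ℕ) (I : Ideal R) : Ideal R :=
  Ideal.span {x : R | ∃ e : ℕ, x ^ p ^ e ∈ frobeniusPower I (p ^ e)}

/-- `I` is Frobenius closed if `I^F = I`. -/
def IsFrobeniusClosed (p : ℕ) (I : Ideal R) : Prop :=
  frobeniusClosure p I = I

/-- The ideal generated by the entries of `x` before index `i`. -/
def prevSpan {n : ℕ} (x : Fin n → R) (i : Fin n) : Ideal R :=
  Ideal.span (x '' {j : Fin n | j < i})

/-- `x` is a d-sequence. -/
def IsDSequence {n : ℕ} (x : Fin n → R) : Prop :=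
  ∀ i j : Fin n, i ≤ j →
    (prevSpan x i).colon (Ideal.span {x i * x j}) = (prevSpan x i).colon (Ideal.span {x j})

/-- `x` is a (full) system of parameters of the local ring `R`. -/
def IsSOP [IsLocalRing R] {n : ℕ} (x : Fin n → R) : Prop :=
  ringKrullDim R = n ∧
    (Ideal.span (Set.range x)).radical = IsLocalRing.maximalIdeal R

/-- `x` is part of a system of parameters. -/
def IsPartialSOP [IsLocalRing R] {t : ℕ} (x : Fin t → R) : Prop :=
  ∃ (n : ℕ) (h : t ≤ n) (y : Fin n → R), IsSOP y ∧ ∀ i : Fin t, y (Fin.castLE h i) = x i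

/-- `x` is a regular sequence on `R`. -/
def IsRegSeq {r : ℕ} (x : Fin r → R) : Prop :=
  Ideal.span (Set.range x) ≠ ⊤ ∧
    ∀ i : Fin r, ∀ y : R, y * x i ∈ prevSpan x i → y ∈ prevSpan x i

end Prelim

section Aux
variable {R : Type*} [CommRing R]

lemma frobeniusPower_mono {I J : Ideal R} (h : I ≤ J) (q : ℕ) :
    frobeniusPower I q ≤ frobeniusPower J q :=
  Ideal.span_mono (Set.image_mono h)

lemma le_frobeniusClosure (p : ℕ) (I : Ideal R) : I ≤ frobeniusClosure p I := by
  intro x hx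
  refine Ideal.subset_span ⟨0, ?_⟩
  rw [pow_zero, pow_one]
  exact Ideal.subset_span ⟨x, hx, pow_one x⟩

lemma frobeniusClosure_le {I K : Ideal R} (p : ℕ) (hIK : I ≤ K)
    (hK : IsFrobeniusClosed p K) : frobeniusClosure p I ≤ K := by
  rw [frobeniusClosure, Ideal.span_le]
  rintro x ⟨e, hx⟩
  have : x ∈ frobeniusClosure p K :=
    Ideal.subset_span ⟨e, frobeniusPower_mono hIK _ hx⟩
  rwa [hK] at this

lemma mem_of_forall_mem_sup_pow [IsNoetherianRing R] [IsLocalRing R]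
    {I : Ideal R} (hI : I ≠ ⊤) {x : R}
    (hx : ∀ s : ℕ, x ∈ I ⊔ (maximalIdeal R) ^ s) : x ∈ I := by
  have hnt : Nontrivial (R ⧸ I) := Ideal.Quotient.nontrivial_iff.mpr hI
  have hloc : IsLocalRing (R ⧸ I) :=
    IsLocalRing.of_surjective' (Ideal.Quotient.mk I) Ideal.Quotient.mk_surjective
  set f := Ideal.Quotient.mk I
  have hmap : Ideal.map f (maximalIdeal R) ≤ maximalIdeal (R ⧸ I) := by
    rw [Ideal.map_le_iff_le_comap]
    have : (Ideal.comap f (maximalIdeal (R ⧸ I))).IsMaximal :=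
      Ideal.comap_isMaximal_of_surjective f Ideal.Quotient.mk_surjective
    rw [IsLocalRing.eq_maximalIdeal this]
  have hmem : ∀ s : ℕ, f x ∈ (maximalIdeal (R ⧸ I)) ^ s := by
    intro s
    have h1 : f x ∈ Ideal.map f (I ⊔ (maximalIdeal R) ^ s) :=
      Ideal.mem_map_of_mem f (hx s)
    rw [Ideal.map_sup, Ideal.map_quotient_self, Ideal.map_pow, bot_sup_eq] at h1
    exact Ideal.pow_right_mono hmap s h1
  have : f x ∈ ⨅ s : ℕ, (maximalIdeal (R ⧸ I)) ^ s := Ideal.mem_iInf.2 hmem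
  rw [Ideal.iInf_pow_eq_bot_of_isLocalRing _
    (IsLocalRing.maximalIdeal.isMaximal (R ⧸ I)).ne_top] at this
  rwa [← Ideal.Quotient.eq_zero_iff_mem]

end Aux


/-- if every full system of parameters generates a Frobenius closed ideal,
then so does every part of a system of parameters. -/
theorem partial_sop_frobenius_closed
    {R : Type*} [CommRing R] [IsNoetherianRing R] [IsLocalRing R]
    (p : ℕ) [Fact p.Prime] [CharP R p]
    (h : ∀ (n : ℕ) (x : Fin n → R), IsSOP x →
      IsFrobeniusClosed p (Ideal.span (Set.range x))) :
    ∀ (t : ℕ) (x : Fin t → R), IsPartialSOP x →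
      IsFrobeniusClosed p (Ideal.span (Set.range x)) := by
  rintro t x ⟨n, ht, y, ⟨hdim, hrad⟩, hxy⟩
  set I := Ideal.span (Set.range x) with hIdef
  have hym : ∀ i, y i ∈ maximalIdeal R := fun i =>
    hrad ▸ Ideal.le_radical (Ideal.subset_span ⟨i, rfl⟩)
  have hIm : I ≤ maximalIdeal R := by
    rw [hIdef, Ideal.span_le]
    rintro _ ⟨i, rfl⟩
    rw [← hxy i]
    exact hym _
  have hInet : I ≠ ⊤ := fun htop =>
    (IsLocalRing.maximalIdeal.isMaximal R).ne_top (top_le_iff.1 (htop ▸ hIm))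
  have key : ∀ s : ℕ, frobeniusClosure p I ≤ I ⊔ (maximalIdeal R) ^ (s + 1) := by
    intro s
    set z : Fin n → R := fun i => if (i : ℕ) < t then y i else (y i) ^ (s + 1) with hzdef
    have hzy : Ideal.span (Set.range z) ≤ Ideal.span (Set.range y) := by
      rw [Ideal.span_le]
      rintro _ ⟨i, rfl⟩
      show z i ∈ Ideal.span (Set.range y)
      by_cases hi : (i : ℕ) < t
      · rw [hzdef]; simp only [if_pos hi]
        exact Ideal.subset_span ⟨i, rfl⟩
      · rw [hzdef]; simp only [if_neg hi]
        exact Ideal.pow_mem_of_mem _ (Ideal.subset_span ⟨i, rfl⟩ : y i ∈ Ideal.span (Set.range y)) _ (Nat.succ_pos s)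
    have hyz : Ideal.span (Set.range y) ≤ (Ideal.span (Set.range z)).radical := by
      rw [Ideal.span_le]
      rintro _ ⟨i, rfl⟩
      by_cases hi : (i : ℕ) < t
      · refine Ideal.le_radical (Ideal.subset_span ⟨i, ?_⟩)
        rw [hzdef]; simp only [if_pos hi]
      · refine Ideal.mem_radical_iff.2 ⟨s + 1, Ideal.subset_span ⟨i, ?_⟩⟩
        rw [hzdef]; simp only [if_neg hi]
    have hzsop : IsSOP z := by
      refine ⟨hdim, le_antisymm ?_ ?_⟩
      · rw [← hrad]
        exact Ideal.radical_le_radical_iff.2 (hzy.trans Ideal.le_radical)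
      · rw [← hrad]
        exact Ideal.radical_le_radical_iff.2 hyz
    have hIz : I ≤ Ideal.span (Set.range z) := by
      rw [hIdef, Ideal.span_le]
      rintro _ ⟨i, rfl⟩
      refine Ideal.subset_span ⟨Fin.castLE ht i, ?_⟩
      have hi : ((Fin.castLE ht i : Fin n) : ℕ) < t := i.isLt
      rw [hzdef]; simp only [if_pos hi]
      exact hxy i
    have hzsup : Ideal.span (Set.range z) ≤ I ⊔ (maximalIdeal R) ^ (s + 1) := by
      rw [Ideal.span_le]
      rintro _ ⟨i, rfl⟩
      by_cases hi : (i : ℕ) < t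
      · refine Ideal.mem_sup_left ?_
        have : z i = x ⟨(i : ℕ), hi⟩ := by
          rw [hzdef]; simp only [if_pos hi]
          rw [← hxy ⟨(i : ℕ), hi⟩]
          congr 1
        rw [this, hIdef]
        exact Ideal.subset_span ⟨_, rfl⟩
      · refine Ideal.mem_sup_right ?_
        have : z i = (y i) ^ (s + 1) := by rw [hzdef]; simp only [if_neg hi]
        rw [this]
        exact Ideal.pow_mem_pow (hym i) _
    exact (frobeniusClosure_le p hIz (h n z hzsop)).trans hzsup
  refine le_antisymm ?_ (le_frobeniusClosure p I)
  intro a ha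
  refine mem_of_forall_mem_sup_pow hInet (fun s => ?_)
  cases s with
  | zero => exact Ideal.mem_sup_right (by simp)
  | succ k => exact key k ha
end

section
/- Let R be a Noetherian local ring of prime characteristic p and let x_1, ..., x_r be a sequence of elements. If for some fixed q = p^e the sequence x_1^q, ..., x_r^q is a d-sequence and the ideals (x_1, ..., x_{i-1}) are Frobenius closed for all 1 ≤ i ≤ r, then x_1, ..., x_r is a d-sequence. -/
open Ideal IsLocalRing

/-- if `x_1^q, ..., x_r^q` is a d-sequence for some `q = p^e` and all the
partial ideals `(x_1, ..., x_{i-1})` are Frobenius closed, then `x` is a d-sequence. -/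
theorem dseq_of_frobenius_power_dseq
    {R : Type*} [CommRing R] [IsNoetherianRing R] [IsLocalRing R]
    (p : ℕ) [Fact p.Prime] [CharP R p]
    {r : ℕ} (x : Fin r → R) (e : ℕ)
    (hd : IsDSequence (fun i => x i ^ p ^ e))
    (hFC : ∀ i : Fin r, IsFrobeniusClosed p (prevSpan x i)) :
    IsDSequence x := by
  have hq : ∀ (I : Ideal R), frobeniusPower I (p ^ e) = Ideal.map (iterateFrobenius R p e) I := by
    intro I
    unfold frobeniusPower
    rw [Ideal.map]
    congr 1
  have hprev : ∀ i : Fin r, prevSpan (fun k => x k ^ p ^ e) i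
      = frobeniusPower (prevSpan x i) (p ^ e) := by
    intro i
    rw [hq, prevSpan, prevSpan, Ideal.map_span, Set.image_image]
    congr 1
  intro i j hij
  apply le_antisymm
  · intro a ha
    rw [Ideal.mem_colon_span_singleton] at ha ⊢
    have h1 : (a * (x i * x j)) ^ p ^ e ∈ frobeniusPower (prevSpan x i) (p ^ e) := by
      rw [hq]
      exact Ideal.mem_map_of_mem _ ha
    rw [← hprev] at h1
    have h2 : a ^ p ^ e ∈ (prevSpan (fun k => x k ^ p ^ e) i).colon
        (Ideal.span {x i ^ p ^ e * x j ^ p ^ e}) := by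
      rw [Ideal.mem_colon_span_singleton]
      have heq : a ^ p ^ e * (x i ^ p ^ e * x j ^ p ^ e) = (a * (x i * x j)) ^ p ^ e := by
        ring
      rw [heq]; exact h1
    have h3 := hd i j hij
    simp only at h3
    rw [h3, Ideal.mem_colon_span_singleton] at h2
    have h4 : (a * x j) ^ p ^ e ∈ frobeniusPower (prevSpan x i) (p ^ e) := by
      rw [← hprev]
      have heq : (a * x j) ^ p ^ e = a ^ p ^ e * x j ^ p ^ e := by ring
      rw [heq]; exact h2
    have h5 : a * x j ∈ frobeniusClosure p (prevSpan x i) :=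
      Ideal.subset_span ⟨e, h4⟩
    rwa [hFC i] at h5
  · intro a ha
    rw [Ideal.mem_colon_span_singleton] at ha ⊢
    have heq : a * (x i * x j) = x i * (a * x j) := by ring
    rw [heq]; exact Ideal.mul_mem_left _ _ ha
end

section
/- Let A be a regular sequence-admitting setting: in a commutative Noetherian ring R, let x_1, ..., x_r be a regular sequence. Then for every k ≥ 1, (x_1^k, ..., x_r^k) : (x_1 x_2 ⋯ x_r)^{k-1} = (x_1, ..., x_r). -/
open Ideal IsLocalRing

/-!
Work modulo an auxiliary ideal `J`, so that a regular sequence is peeled off from the front: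
`a, x₁, …, xₙ` is regular modulo `J` iff `a` is a nonzerodivisor modulo `J` and `x` is regular
modulo `(a) + J`. Two exchange facts make the induction work in any commutative ring, without
permuting the sequence: the head `a` may be replaced by `aⁿ`, and `a` stays a nonzerodivisor
modulo `(x) + J`. Then `u a^k (∏ xᵢ)^k ∈ (a^{k+1}) + (xᵢ^{k+1}) + J` gives, by induction modulo
`(a^{k+1}) + J`, that `u a^k ∈ (a^{k+1}) + (x) + J`, and cancelling `a^k` modulo `(x) + J` leaves
`u ∈ (a) + (x) + J`.
-/

section RegularModulo

variable {R : Type*} [CommRing R]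

def IsNonZeroDivisorMod (J : Ideal R) (a : R) : Prop :=
  ∀ y, y * a ∈ J → y ∈ J

def IsWeaklyRegularMod (J : Ideal R) {r : ℕ} (x : Fin r → R) : Prop :=
  ∀ i, IsNonZeroDivisorMod (J ⊔ prevSpan x i) (x i)

namespace IsNonZeroDivisorMod

variable {J : Ideal R} {a b : R}

theorem pow (ha : IsNonZeroDivisorMod J a) (n : ℕ) : IsNonZeroDivisorMod J (a ^ n) := by
  induction n with
  | zero => intro y hy; simpa using hy
  | succ n ih => exact fun y hy => ih y (ha _ (by rwa [pow_succ, ← mul_assoc] at hy))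

theorem mem_sup_of_mul_pow_mem (ha : IsNonZeroDivisorMod J a) {y : R} {n : ℕ}
    (hy : y * a ^ n ∈ span {a ^ (n + 1)} ⊔ J) : y ∈ span {a} ⊔ J := by
  obtain ⟨c, j, hj, hcj⟩ := mem_span_singleton_sup.1 hy
  have hyc : y - c * a ∈ J := ha.pow n _ (by convert hj using 1; linear_combination -hcj)
  exact mem_span_singleton_sup.2 ⟨c, _, hyc, by ring⟩

theorem swap (ha : IsNonZeroDivisorMod J a) (hb : IsNonZeroDivisorMod (span {a} ⊔ J) b) :
    IsNonZeroDivisorMod (span {b} ⊔ J) a := by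
  intro y hy
  obtain ⟨c, j, hj, hcj⟩ := mem_span_singleton_sup.1 hy
  obtain ⟨d, j', hj', hdj⟩ :=
    mem_span_singleton_sup.1 (hb c (mem_span_singleton_sup.2 ⟨y, -j, neg_mem hj, by
      linear_combination -hcj⟩))
  have hyd : y - d * b ∈ J :=
    ha _ (by convert add_mem hj (J.mul_mem_right b hj') using 1; linear_combination -hcj - b * hdj)
  exact mem_span_singleton_sup.2 ⟨d, _, hyd, by ring⟩

theorem sup_span_pow (ha : IsNonZeroDivisorMod J a) (hb : IsNonZeroDivisorMod (span {a} ⊔ J) b)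
    (n : ℕ) : IsNonZeroDivisorMod (span {a ^ n} ⊔ J) b := by
  induction n with
  | zero => simp [IsNonZeroDivisorMod]
  | succ n ih =>
    intro y hy
    have hle : span {a ^ (n + 1)} ⊔ J ≤ span {a ^ n} ⊔ J :=
      sup_le_sup_right (span_singleton_le_span_singleton.2 (pow_dvd_pow a n.le_succ)) J
    obtain ⟨c, j, hj, hcj⟩ := mem_span_singleton_sup.1 (ih y (hle hy))
    have hcb : c * b * a ^ n ∈ span {a ^ (n + 1)} ⊔ J := by
      convert sub_mem hy (mem_sup_right (J.mul_mem_right b hj)) using 1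
      linear_combination b * hcj
    obtain ⟨e, j', hj', hej⟩ := mem_span_singleton_sup.1 (hb c (ha.mem_sup_of_mul_pow_mem hcb))
    refine mem_span_singleton_sup.2 ⟨e, j' * a ^ n + j, add_mem (J.mul_mem_right _ hj') hj, ?_⟩
    linear_combination hcj + a ^ n * hej

end IsNonZeroDivisorMod

section Cons

variable {n : ℕ} (a : R) (x : Fin n → R)

theorem prevSpan_cons_zero : prevSpan (Fin.cons a x : Fin (n + 1) → R) 0 = ⊥ := by
  simp [prevSpan]

theorem prevSpan_cons_succ (i : Fin n) :
    prevSpan (Fin.cons a x : Fin (n + 1) → R) i.succ = span {a} ⊔ prevSpan x i := by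
  rw [prevSpan, prevSpan, ← span_insert]
  congr 1
  ext y
  simp [Fin.exists_fin_succ, Fin.succ_pos, eq_comm]

theorem isWeaklyRegularMod_cons_iff {J : Ideal R} :
    IsWeaklyRegularMod J (Fin.cons a x : Fin (n + 1) → R) ↔
      IsNonZeroDivisorMod J a ∧ IsWeaklyRegularMod (span {a} ⊔ J) x := by
  simp only [IsWeaklyRegularMod, Fin.forall_fin_succ, Fin.cons_zero, Fin.cons_succ,
    prevSpan_cons_zero, prevSpan_cons_succ, sup_bot_eq, sup_left_comm J, sup_assoc]

theorem span_range_cons :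
    span (Set.range (Fin.cons a x : Fin (n + 1) → R)) = span {a} ⊔ span (Set.range x) := by
  rw [Fin.range_cons, span_insert]

end Cons

theorem IsRegSeq.isWeaklyRegularMod_bot {r : ℕ} {x : Fin r → R} (hx : IsRegSeq x) :
    IsWeaklyRegularMod ⊥ x := by
  simpa [IsWeaklyRegularMod, IsNonZeroDivisorMod] using hx.2

namespace IsWeaklyRegularMod

theorem sup_span_pow {a : R} {r : ℕ} {x : Fin r → R} {J : Ideal R}
    (hx : IsWeaklyRegularMod (span {a} ⊔ J) x) (ha : IsNonZeroDivisorMod J a) (n : ℕ) :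
    IsWeaklyRegularMod (span {a ^ n} ⊔ J) x := by
  induction x using Fin.consInduction generalizing J with
  | elim0 => exact fun i => i.elim0
  | cons b x ih =>
    rw [isWeaklyRegularMod_cons_iff, sup_left_comm] at hx ⊢
    exact ⟨ha.sup_span_pow hx.1 n, ih hx.2 (ha.swap hx.1)⟩

theorem isNonZeroDivisorMod_sup_span {a : R} {r : ℕ} {x : Fin r → R} {J : Ideal R}
    (hx : IsWeaklyRegularMod (span {a} ⊔ J) x) (ha : IsNonZeroDivisorMod J a) :
    IsNonZeroDivisorMod (span (Set.range x) ⊔ J) a := by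
  induction x using Fin.consInduction generalizing J with
  | elim0 => simpa using ha
  | cons b x ih =>
    rw [isWeaklyRegularMod_cons_iff, sup_left_comm] at hx
    rw [span_range_cons, sup_assoc, sup_left_comm]
    exact ih hx.2 (ha.swap hx.1)

theorem colon_span_prod_pow_le {r : ℕ} {x : Fin r → R} {J : Ideal R}
    (hx : IsWeaklyRegularMod J x) (k : ℕ) :
    (span (Set.range fun i => x i ^ (k + 1)) ⊔ J).colon (span {(∏ i, x i) ^ k}) ≤
      span (Set.range x) ⊔ J := by
  induction x using Fin.consInduction generalizing J with
  | elim0 => intro u hu; simpa using hu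
  | cons a x ih =>
    rw [isWeaklyRegularMod_cons_iff] at hx
    intro u hu
    rw [mem_colon_span_singleton, Fin.prod_cons, mul_pow, ← mul_assoc,
      ← Function.comp_def (· ^ (k + 1)), Fin.comp_cons, span_range_cons, sup_assoc,
      sup_left_comm] at hu
    have hak : u * a ^ k ∈ span {a ^ (k + 1)} ⊔ (span (Set.range x) ⊔ J) := by
      rw [sup_left_comm]
      exact ih (hx.2.sup_span_pow hx.1 (k + 1)) (mem_colon_span_singleton.2 hu)
    rw [span_range_cons, sup_assoc]
    exact (hx.2.isNonZeroDivisorMod_sup_span hx.1).mem_sup_of_mul_pow_mem hak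

end IsWeaklyRegularMod

theorem span_range_le_colon_span_prod_pow {r : ℕ} (x : Fin r → R) (k : ℕ) :
    span (Set.range x) ≤
      (span (Set.range fun i => x i ^ (k + 1))).colon (span {(∏ i, x i) ^ k}) := by
  rw [span_le]
  rintro _ ⟨i, rfl⟩
  refine mem_colon_span_singleton.2 (mem_of_dvd _ ?_ (subset_span ⟨i, rfl⟩))
  dsimp only
  rw [pow_succ']
  exact mul_dvd_mul_left _ (pow_dvd_pow_of_dvd (Finset.dvd_prod_of_mem _ (Finset.mem_univ i)) k)

end RegularModulo

theorem colon_identity_of_regular_sequence_general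
    {R : Type*} [CommRing R] {r : ℕ} (x : Fin r → R)
    (hreg : IsRegSeq x) :
    ∀ k : ℕ, 1 ≤ k →
      (Ideal.span (Set.range fun i => x i ^ k)).colon
          (Ideal.span {(∏ i, x i) ^ (k - 1)}) = Ideal.span (Set.range x) := by
  intro k hk
  obtain ⟨k, rfl⟩ : ∃ m, k = m + 1 := ⟨k - 1, by omega⟩
  rw [Nat.add_sub_cancel]
  refine le_antisymm ?_ (span_range_le_colon_span_prod_pow x k)
  simpa using hreg.isWeaklyRegularMod_bot.colon_span_prod_pow_le k

/-- for a regular sequence `x_1, ..., x_r` and every `k ≥ 1`,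
`(x_1^k, ..., x_r^k) : (x_1 x_2 ⋯ x_r)^{k-1} = (x_1, ..., x_r)`. -/
theorem colon_identity_of_regular_sequence
    {R : Type*} [CommRing R] [IsNoetherianRing R] {r : ℕ} (x : Fin r → R)
    (hreg : IsRegSeq x) :
    ∀ k : ℕ, 1 ≤ k →
      (Ideal.span (Set.range fun i => x i ^ k)).colon
          (Ideal.span {(∏ i, x i) ^ (k - 1)}) = Ideal.span (Set.range x) :=
  colon_identity_of_regular_sequence_general x hreg
end

section
/- Let (R, m) be a Noetherian local ring of prime characteristic p and dimension n such that every ideal generated by a system of parameters is Frobenius closed. Then the Frobenius action on the top local cohomology module H^n_m(R) is injective. -/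
open Ideal IsLocalRing

/-- if every sop-generated ideal is Frobenius closed, then the Frobenius
action on the top local cohomology `H^n_m(R) = colim_t R/(x_1^t, ..., x_n^t)` is injective;
this is expressed at the finite level: `y^p ∈ (x_1^{pt}, ..., x_n^{pt}) → y ∈ (x_1^t, ..., x_n^t)`. -/
theorem frobenius_injective_on_top_local_cohomology
    {R : Type*} [CommRing R] [IsNoetherianRing R] [IsLocalRing R]
    (p : ℕ) [Fact p.Prime] [CharP R p]
    (hFC : ∀ (n : ℕ) (z : Fin n → R), IsSOP z →
      IsFrobeniusClosed p (Ideal.span (Set.range z))) :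
    ∀ (n : ℕ) (x : Fin n → R), IsSOP x → ∀ t : ℕ, 1 ≤ t → ∀ y : R,
      y ^ p ∈ Ideal.span (Set.range fun i => x i ^ (p * t)) →
        y ∈ Ideal.span (Set.range fun i => x i ^ t) := by
  intro n x hx t ht y hy
  have hSOP : IsSOP (fun i => x i ^ t) := by
    refine ⟨hx.1, ?_⟩
    rw [← hx.2]
    apply le_antisymm
    · rw [Ideal.radical_le_radical_iff, Ideal.span_le, Set.range_subset_iff]
      intro i
      exact Ideal.le_radical (Ideal.pow_mem_of_mem _ (Ideal.subset_span (Set.mem_range_self i)) t ht)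
    · rw [Ideal.radical_le_radical_iff, Ideal.span_le, Set.range_subset_iff]
      intro i
      exact ⟨t, Ideal.subset_span (Set.mem_range_self i)⟩
  have hclosed := hFC n (fun i => x i ^ t) hSOP
  rw [IsFrobeniusClosed] at hclosed
  rw [← hclosed]
  apply Ideal.subset_span
  refine ⟨1, ?_⟩
  simp only [pow_one]
  have hle : Ideal.span (Set.range fun i => x i ^ (p * t)) ≤
      frobeniusPower (Ideal.span (Set.range fun i => x i ^ t)) p := by
    rw [Ideal.span_le, Set.range_subset_iff]
    intro i
    apply Ideal.subset_span
    refine ⟨x i ^ t, Ideal.subset_span (Set.mem_range_self i), ?_⟩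
    simp [← pow_mul, mul_comm]
  exact hle hy
end
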